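/- The quotients P/(P ∩ R) and Q/(Q ∩ R) are both one-dimensional, i.e., dim(P/(P ∩ R)) = dim(Q/(Q ∩ R)) = 1. -/

import Mathlib

open Submodule

/-! A subspace `S` disjoint from `R` extends to a complement `X` of `R`; `X` lies in 𝒢, so it
is a complement of `P` or of `Q`. That is impossible when `S` contains nonzero vectors of both
`P` and `Q`; and a subspace properly inside `R` is a complement of no `X` disjoint from `R`.
Taking for `S` the zero space, a line, or a plane shows first that neither `P` nor `Q` lies in
`R`, and then that `P ≤ ⟨q⟩ + R` for any `q ∈ Q \ R`, so `P/(P ∩ R) ≅ (P + R)/R` is a line. -/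

/-- `X` belongs to the Grassmannian 𝒢: `X` is isomorphic (as a `K`-vector space)
to the quotient `V ⧸ X`, equivalently to one (hence every) complement of `X`. -/
def InG (K V : Type*) [DivisionRing K] [AddCommGroup V] [Module K V]
    (X : Submodule K V) : Prop :=
  Nonempty (X ≃ₗ[K] (V ⧸ X))

/-- `quotRank K V A B` is the dimension of the quotient space `B / (A ∩ B)`,
where `A ∩ B` is viewed as a subspace of `B`.  For `A ≤ B` this is `dim (B/A)`. -/
noncomputable def quotRank (K V : Type*) [DivisionRing K] [AddCommGroup V] [Module K V]
    (A B : Submodule K V) : Cardinal :=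
  Module.rank K (↥B ⧸ (A.comap B.subtype))

/-- `X` and `Y` are adjacent: `dim ((X+Y)/X) = dim ((X+Y)/Y) = 1`. -/
def Adjacent (K V : Type*) [DivisionRing K] [AddCommGroup V] [Module K V]
    (X Y : Submodule K V) : Prop :=
  quotRank K V X (X ⊔ Y) = 1 ∧ quotRank K V Y (X ⊔ Y) = 1

theorem eq_of_isCompl_of_disjoint_of_le {α : Type*} [Lattice α] [BoundedOrder α]
    [IsModularLattice α] {X P R : α} (hXP : IsCompl X P) (hXR : Disjoint X R) (hPR : P ≤ R) :
    P = R :=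
  le_antisymm hPR <| le_of_eq <| calc
    R = R ⊓ (X ⊔ P) := by rw [hXP.sup_eq_top, inf_top_eq]
    _ = R ⊓ X ⊔ P := by rw [sup_comm, inf_sup_assoc_of_le _ hPR, sup_comm]
    _ = P := by rw [inf_comm, hXR.eq_bot, bot_sup_eq]

section

variable {K V : Type*} [DivisionRing K] [AddCommGroup V] [Module K V]

theorem InG.of_isCompl {R X : Submodule K V} (hR : InG K V R) (h : IsCompl R X) :
    InG K V X :=
  let ⟨e⟩ := hR
  ⟨(quotientEquivOfIsCompl R X h).symm.trans e.symm |>.trans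
    (quotientEquivOfIsCompl X R h.symm).symm⟩

theorem quotRank_eq_rank_map (A B : Submodule K V) :
    quotRank K V A B = Module.rank K (B.map A.mkQ) := by
  have hker : LinearMap.ker (A.mkQ ∘ₗ B.subtype) = A.comap B.subtype := by
    rw [LinearMap.ker_comp, ker_mkQ]
  have hrange : LinearMap.range (A.mkQ ∘ₗ B.subtype) = B.map A.mkQ := by
    rw [LinearMap.range_comp, range_subtype]
  rw [quotRank, ← hker, ← hrange]
  exact (A.mkQ ∘ₗ B.subtype).quotKerEquivRange.rank_eq

theorem quotRank_eq_one_of_le_span_singleton_sup {P R : Submodule K V} {v : V}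
    (hPR : ¬ P ≤ R) (hPv : P ≤ span K {v} ⊔ R) : quotRank K V R P = 1 := by
  rw [quotRank_eq_rank_map]
  refine le_antisymm ((rank_submodule_le_one_iff' _).mpr ⟨R.mkQ v, ?_⟩) ?_
  · simpa [Submodule.map_sup, map_span, mkQ_map_self] using map_mono (f := R.mkQ) hPv
  · rw [Cardinal.one_le_iff_ne_zero, Ne, rank_eq_zero, ← le_bot_iff,
      map_le_iff_le_comap, comap_bot, ker_mkQ]
    exact hPR

theorem not_isCompl_of_le_of_not_disjoint {X S P : Submodule K V} (hSX : S ≤ X)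
    (hSP : ¬ Disjoint S P) : ¬ IsCompl X P :=
  fun h => hSP (h.disjoint.mono_left hSX)

theorem not_disjoint_span_singleton_of_mem {P : Submodule K V} {v : V} (hv : v ∈ P)
    (hv0 : v ≠ 0) : ¬ Disjoint (span K {v}) P := by
  rw [disjoint_comm, disjoint_span_singleton]
  exact fun h => hv0 (h hv)

variable {P Q R : Submodule K V} (hR : InG K V R)
  (hmain : ∀ X : Submodule K V, InG K V X → IsCompl X R → (IsCompl X P ∨ IsCompl X Q))
include hR hmain

theorem false_of_disjoint_of_lt_or_not_disjoint {S : Submodule K V} (hSR : Disjoint S R)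
    (hSP : P < R ∨ ¬ Disjoint S P) (hSQ : Q < R ∨ ¬ Disjoint S Q) : False := by
  obtain ⟨X, hSX, hXR⟩ := hSR.exists_isCompl
  have not_isCompl {T : Submodule K V} (hST : T < R ∨ ¬ Disjoint S T) : ¬ IsCompl X T := by
    rcases hST with hTR | hST
    · exact fun h => hTR.ne (eq_of_isCompl_of_disjoint_of_le h hXR.disjoint hTR.le)
    · exact not_isCompl_of_le_of_not_disjoint hSX hST
  rcases hmain X (hR.of_isCompl hXR.symm) hXR with h | h
  exacts [not_isCompl hSP h, not_isCompl hSQ h]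

theorem not_le_of_forall_isCompl (hRP : R ≠ P) (hRQ : R ≠ Q) : ¬ P ≤ R := by
  intro hPR
  have hPlt : P < R := lt_of_le_of_ne hPR hRP.symm
  by_cases hQR : Q ≤ R
  · exact false_of_disjoint_of_lt_or_not_disjoint hR hmain disjoint_bot_left (.inl hPlt)
      (.inl (lt_of_le_of_ne hQR hRQ.symm))
  · obtain ⟨q, hqQ, hqR⟩ := SetLike.not_le_iff_exists.mp hQR
    have hq0 : q ≠ 0 := fun h => hqR (h ▸ R.zero_mem)
    exact false_of_disjoint_of_lt_or_not_disjoint hR hmain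
      ((disjoint_span_singleton' hq0).mpr hqR).symm (.inl hPlt)
      (.inr (not_disjoint_span_singleton_of_mem hqQ hq0))

theorem le_span_singleton_sup_of_forall_isCompl {q : V} (hqQ : q ∈ Q) (hqR : q ∉ R) :
    P ≤ span K {q} ⊔ R := by
  intro p hpP
  by_contra hp
  have hp0 : p ≠ 0 := fun h => hp (h ▸ zero_mem _)
  have hq0 : q ≠ 0 := fun h => hqR (h ▸ R.zero_mem)
  have hqR' : Disjoint (span K {q}) R := ((disjoint_span_singleton' hq0).mpr hqR).symm
  have hpqR : Disjoint (span K {p}) (span K {q} ⊔ R) :=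
    ((disjoint_span_singleton' hp0).mpr hp).symm
  refine false_of_disjoint_of_lt_or_not_disjoint hR hmain
    (hqR'.disjoint_sup_left_of_disjoint_sup_right hpqR) (.inr fun h => ?_) (.inr fun h => ?_)
  · exact not_disjoint_span_singleton_of_mem hpP hp0 (h.mono_left le_sup_left)
  · exact not_disjoint_span_singleton_of_mem hqQ hq0 (h.mono_left le_sup_right)

end

theorem stmt_6_general (K V : Type*) [DivisionRing K] [AddCommGroup V] [Module K V]
    (P Q R : Submodule K V) (hR : InG K V R)
    (hRP : R ≠ P) (hRQ : R ≠ Q)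
    (hmain : ∀ X : Submodule K V, InG K V X → IsCompl X R → (IsCompl X P ∨ IsCompl X Q)) :
    quotRank K V R P = 1 ∧ quotRank K V R Q = 1 := by
  have hmain' : ∀ X : Submodule K V, InG K V X → IsCompl X R → (IsCompl X Q ∨ IsCompl X P) :=
    fun X hX hXR => (hmain X hX hXR).symm
  have hPR := not_le_of_forall_isCompl hR hmain hRP hRQ
  have hQR := not_le_of_forall_isCompl hR hmain' hRQ hRP
  obtain ⟨p, hpP, hpR⟩ := SetLike.not_le_iff_exists.mp hPR
  obtain ⟨q, hqQ, hqR⟩ := SetLike.not_le_iff_exists.mp hQR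
  exact ⟨quotRank_eq_one_of_le_span_singleton_sup hPR
      (le_span_singleton_sup_of_forall_isCompl hR hmain hqQ hqR),
    quotRank_eq_one_of_le_span_singleton_sup hQR
      (le_span_singleton_sup_of_forall_isCompl hR hmain' hpP hpR)⟩

/-- The quotients `P/(P ∩ R)` and `Q/(Q ∩ R)` are one-dimensional. -/
theorem stmt_6 (K V : Type*) [DivisionRing K] [AddCommGroup V] [Module K V]
    (P Q R : Submodule K V) (hP : InG K V P) (hQ : InG K V Q) (hR : InG K V R)
    (hRP : R ≠ P) (hRQ : R ≠ Q)
    (hmain : ∀ X : Submodule K V, InG K V X → IsCompl X R → (IsCompl X P ∨ IsCompl X Q)) :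
    quotRank K V R P = 1 ∧ quotRank K V R Q = 1 :=
  stmt_6_general K V P Q R hR hRP hRQ hmain
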